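/- arXiv:0806.4540 — 6 statements merged into one kernel-verified Lean document; each statement's English description precedes it below -/
import Mathlib

section
/- Let Γ be an infinite group that is not presentable by a product. Then every finite index subgroup of Γ has finite centre. Equivalently (contrapositive): if some finite index subgroup of an infinite group Γ has infinite centre, then Γ is presentable by a product. -/
/-!
If `Z` is the centre of a finite-index subgroup `H`, then `(z, h) ↦ z * h` is a homomorphism
`Z × H →* G`, because `Z` commutes with `H`. Its image contains `H` and both factors embed into `G`,
so an infinite `Z` presents `G` by a product.
-/

/-- A group `G` is *presentable by a product* if there are groups `A`, `B` and a
homomorphism `φ : A × B →* G` whose image has finite index in `G` and such that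
the images `φ(A × {1})` and `φ({1} × B)` are both infinite. -/
def PresentableByProduct (G : Type*) [Group G] : Prop :=
  ∃ (A B : Type) (_ : Group A) (_ : Group B) (φ : A × B →* G),
    φ.range.index ≠ 0 ∧
    (Set.range fun a : A => φ (a, 1)).Infinite ∧
    (Set.range fun b : B => φ (1, b)).Infinite

namespace PresentableByProduct

theorem of_commute {G A B : Type} [Group G] [Group A] [Group B]
    (f : A →* G) (g : B →* G) (comm : ∀ a b, Commute (f a) (g b))
    (hf : (Set.range f).Infinite) (hg : (Set.range g).Infinite) (hidx : g.range.index ≠ 0) :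
    PresentableByProduct G := by
  refine ⟨A, B, inferInstance, inferInstance, f.noncommCoprod g comm, ?_, ?_, ?_⟩
  · have hle : g.range ≤ (f.noncommCoprod g comm).range := by
      rintro _ ⟨b, rfl⟩
      exact ⟨(1, b), by simp [MonoidHom.noncommCoprod_apply]⟩
    exact ne_zero_of_dvd_ne_zero hidx (Subgroup.index_dvd_of_le hle)
  · simpa [MonoidHom.noncommCoprod_apply] using hf
  · simpa [MonoidHom.noncommCoprod_apply] using hg

theorem of_infinite_center {G : Type} [Group G] (H : Subgroup G) (hH : H.index ≠ 0)
    [Infinite (Subgroup.center H)] : PresentableByProduct G := by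
  have : Infinite H := .of_injective _ (Subgroup.center H).subtype_injective
  refine of_commute (H.subtype.comp (Subgroup.center H).subtype) H.subtype
    (fun z h => congrArg Subtype.val (Subgroup.mem_center_iff.1 z.2 h).symm)
    (Set.infinite_range_of_injective <|
      H.subtype_injective.comp (Subgroup.center H).subtype_injective)
    (Set.infinite_range_of_injective H.subtype_injective) ?_
  rwa [Subgroup.range_subtype]

end PresentableByProduct

theorem center_finite_of_not_presentable_general {G : Type} [Group G]
    (h : ¬ PresentableByProduct G)
    (H : Subgroup G) (hH : H.index ≠ 0) :
    Finite (Subgroup.center H) := by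
  rw [← not_infinite_iff_finite]
  intro
  exact h (.of_infinite_center H hH)

/-- Let Γ be an infinite group that is not presentable by a product.
Then every finite index subgroup of Γ has finite centre. -/
theorem center_finite_of_not_presentable {G : Type} [Group G] [Infinite G]
    (h : ¬ PresentableByProduct G)
    (H : Subgroup G) (hH : H.index ≠ 0) :
    Finite (Subgroup.center H) :=
  center_finite_of_not_presentable_general h H hH
end

section
/- Let Γ be an infinite group such that every finite index subgroup of Γ has trivial centre. Then Γ is presentable by a product if and only if Γ has a finite index subgroup that is isomorphic to a direct product of two infinite groups. -/
/-!
If `φ : A × B →* Γ` presents `Γ` by a product, the images `C` of `A` and `D` of `B` commute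
elementwise and generate the finite index subgroup `φ.range`. An element of `C ⊓ D` commutes with
both `C` and `D`, so it is central in `φ.range`; as this centre is trivial, `C ⊓ D = 1` and
`φ.range ≅ C × D` with `C`, `D` infinite. Conversely, a finite index subgroup `H ≅ A × B` presents
`Γ` by the product through the inclusion `A × B ≅ H ≤ Γ`.
-/

namespace Subgroup

variable {G : Type*} [Group G]

theorem disjoint_of_commute_of_center_sup_eq_bot {C D : Subgroup G}
    (comm : ∀ c ∈ C, ∀ d ∈ D, Commute c d) (hcenter : center ↥(C ⊔ D) = ⊥) :
    Disjoint C D := by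
  rw [disjoint_iff_inf_le]
  rintro x ⟨hxC, hxD⟩
  have hcentral : C ⊔ D ≤ centralizer {x} :=
    sup_le (fun c hc => mem_centralizer_singleton_iff.mpr (comm c hc x hxD).eq)
      (fun d hd => mem_centralizer_singleton_iff.mpr (comm x hxC d hd).eq.symm)
  have hx : (⟨x, mem_sup_left hxC⟩ : ↥(C ⊔ D)) ∈ center ↥(C ⊔ D) :=
    mem_center_iff.mpr fun y => Subtype.ext (mem_centralizer_singleton_iff.mp (hcentral y.2))
  rw [hcenter, mem_bot] at hx
  exact mem_bot.mpr (congrArg Subtype.val hx)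

noncomputable def prodMulEquivSup {C D : Subgroup G}
    (comm : ∀ c ∈ C, ∀ d ∈ D, Commute c d) (hdisj : Disjoint C D) :
    C × D ≃* ↥(C ⊔ D) :=
  have hinj : Function.Injective (C.subtype.noncommCoprod D.subtype fun c d => comm c c.2 d d.2) :=
    (MonoidHom.noncommCoprod_injective _ _ _).mpr
      ⟨C.subtype_injective, D.subtype_injective, by rwa [range_subtype, range_subtype]⟩
  (MonoidHom.ofInjective hinj).trans <| MulEquiv.subgroupCongr <|
    (MonoidHom.noncommCoprod_range _ _ _).trans <| by rw [range_subtype, range_subtype]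

end Subgroup

namespace MonoidHom

variable {A B G : Type*} [Group A] [Group B] [Group G]

theorem range_eq_range_comp_inl_sup_range_comp_inr (φ : A × B →* G) :
    φ.range = (φ.comp (inl A B)).range ⊔ (φ.comp (inr A B)).range := by
  conv_lhs => rw [← noncommCoprod_unique φ]
  exact noncommCoprod_range _ _ _

noncomputable def rangeMulEquivProdOfCenterEqBot (φ : A × B →* G)
    (hcenter : Subgroup.center φ.range = ⊥) :
    φ.range ≃* (φ.comp (inl A B)).range × (φ.comp (inr A B)).range :=
  have comm : ∀ c ∈ (φ.comp (inl A B)).range, ∀ d ∈ (φ.comp (inr A B)).range, Commute c d := by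
    rintro _ ⟨a, rfl⟩ _ ⟨b, rfl⟩
    exact (commute_inl_inr a b).map φ
  have hsup := φ.range_eq_range_comp_inl_sup_range_comp_inr
  have hdisj := Subgroup.disjoint_of_commute_of_center_sup_eq_bot comm (hsup ▸ hcenter)
  (MulEquiv.subgroupCongr hsup).trans (Subgroup.prodMulEquivSup comm hdisj).symm

end MonoidHom

theorem presentableByProduct_of_mulEquiv_prod {G A B : Type} [Group G] [Group A] [Group B]
    [Infinite A] [Infinite B] {H : Subgroup G} (hH : H.index ≠ 0) (e : H ≃* A × B) :
    PresentableByProduct G := by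
  have hinj : Function.Injective (H.subtype.comp e.symm.toMonoidHom) :=
    H.subtype_injective.comp e.symm.injective
  refine ⟨A, B, inferInstance, inferInstance, H.subtype.comp e.symm.toMonoidHom, ?_,
    Set.infinite_range_of_injective (hinj.comp (Prod.mk_left_injective 1)),
    Set.infinite_range_of_injective (hinj.comp (Prod.mk_right_injective 1))⟩
  rwa [MonoidHom.range_comp, MonoidHom.range_eq_top_of_surjective _ e.symm.surjective,
    ← MonoidHom.range_eq_map, Subgroup.range_subtype]

theorem presentable_iff_virtual_product_of_trivial_centers_general {G : Type} [Group G]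
    (hc : ∀ H : Subgroup G, H.index ≠ 0 → Subgroup.center H = ⊥) :
    PresentableByProduct G ↔
      ∃ (H : Subgroup G) (A B : Type) (_ : Group A) (_ : Group B),
        H.index ≠ 0 ∧ Infinite A ∧ Infinite B ∧ Nonempty (H ≃* A × B) := by
  constructor
  · rintro ⟨A, B, _, _, φ, hindex, hA, hB⟩
    exact ⟨φ.range, (φ.comp (MonoidHom.inl A B)).range, (φ.comp (MonoidHom.inr A B)).range,
      inferInstance, inferInstance, hindex, hA.to_subtype, hB.to_subtype,
      ⟨φ.rangeMulEquivProdOfCenterEqBot (hc _ hindex)⟩⟩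
  · rintro ⟨H, A, B, _, _, hindex, hA, hB, ⟨e⟩⟩
    exact presentableByProduct_of_mulEquiv_prod hindex e

/-- Let Γ be an infinite group such that every finite index subgroup
of Γ has trivial centre. Then Γ is presentable by a product if and only if Γ has
a finite index subgroup that is isomorphic to a direct product of two infinite
groups. -/
theorem presentable_iff_virtual_product_of_trivial_centers {G : Type} [Group G]
    [Infinite G]
    (hc : ∀ H : Subgroup G, H.index ≠ 0 → Subgroup.center H = ⊥) :
    PresentableByProduct G ↔
      ∃ (H : Subgroup G) (A B : Type) (_ : Group A) (_ : Group B),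
        H.index ≠ 0 ∧ Infinite A ∧ Infinite B ∧ Nonempty (H ≃* A × B) :=
  presentable_iff_virtual_product_of_trivial_centers_general hc
end

section
/- Let Γ be an infinite group and let Γ' be a subgroup of finite index in Γ (so Γ' is also infinite). Then Γ' is presentable by a product if and only if Γ is presentable by a product. -/
/-! Composing a presentation of `H` with the inclusion `H → G` gives one of `G`, since indices
multiply. Conversely, given `ψ : A × B →* G`, shrink `A` and `B` to the preimages of `H` under
`a ↦ ψ (a, 1)` and `b ↦ ψ (1, b)`. These have finite index, so their images are still infinite
(a finite-index subgroup of an infinite group is infinite) and the image of their product still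
has finite index; as `ψ (a, b) = ψ (a, 1) * ψ (1, b)`, that image lies in `H`. -/

open Subgroup

theorem Subgroup.index_comap_ne_zero {G K : Type*} [Group G] [Group K] {H : Subgroup K}
    (hH : H.index ≠ 0) (f : G →* K) : (H.comap f).index ≠ 0 := by
  rw [index_comap]
  exact mt index_eq_zero_of_relIndex_eq_zero hH

theorem MonoidHom.infinite_map_of_index_ne_zero {G K : Type*} [Group G] [Group K] (f : G →* K)
    (hf : (Set.range f).Infinite) {S : Subgroup G} (hS : S.index ≠ 0) :
    ((S.map f : Subgroup K) : Set K).Infinite := by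
  have : Infinite f.range := by rwa [← Set.infinite_coe_iff, ← MonoidHom.coe_range] at hf
  set T := S.map f.rangeRestrict
  have hT : T.FiniteIndex :=
    ⟨ne_zero_of_dvd_ne_zero hS (S.index_map_dvd f.rangeRestrict_surjective)⟩
  have hT_infinite : Infinite T := by
    by_contra h
    rw [not_infinite_iff_finite] at h
    exact not_finite_iff_infinite.2 ‹_› ((finite_iff_finite_and_finiteIndex T).2 ⟨h, hT⟩)
  have hmap : T.map f.range.subtype = S.map f := by
    rw [map_map, MonoidHom.subtype_comp_rangeRestrict]
  rw [← hmap, coe_map]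
  exact (Set.infinite_coe_iff.1 hT_infinite).image f.range.subtype_injective.injOn

structure MonoidHom.IsProductPresentation {A B G : Type*} [Group A] [Group B] [Group G]
    (φ : A × B →* G) : Prop where
  index_range_ne_zero : φ.range.index ≠ 0
  infinite_left : (Set.range fun a : A => φ (a, 1)).Infinite
  infinite_right : (Set.range fun b : B => φ (1, b)).Infinite

theorem presentableByProduct_iff {G : Type*} [Group G] :
    PresentableByProduct G ↔
      ∃ (A B : Type) (_ : Group A) (_ : Group B) (φ : A × B →* G), φ.IsProductPresentation :=
  ⟨fun ⟨A, B, _, _, φ, h₁, h₂, h₃⟩ => ⟨A, B, _, _, φ, ⟨h₁, h₂, h₃⟩⟩,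
    fun ⟨A, B, _, _, φ, hφ⟩ => ⟨A, B, _, _, φ, hφ.1, hφ.2, hφ.3⟩⟩

namespace MonoidHom

variable {A B G K : Type*} [Group A] [Group B] [Group G] [Group K]

theorem isProductPresentation_comp_iff {f : G →* K} (hf : Function.Injective f)
    (hidx : f.range.index ≠ 0) {φ : A × B →* G} :
    (f.comp φ).IsProductPresentation ↔ φ.IsProductPresentation := by
  have hrange : (f.comp φ).range.index = φ.range.index * f.range.index := by
    rw [range_comp, φ.range.index_map_of_injective hf]
  have hleft : (Set.range fun a : A => f.comp φ (a, 1)).Infinite ↔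
      (Set.range fun a => φ (a, 1)).Infinite := by
    rw [← Set.infinite_image_iff hf.injOn, ← Set.range_comp]; rfl
  have hright : (Set.range fun b : B => f.comp φ (1, b)).Infinite ↔
      (Set.range fun b => φ (1, b)).Infinite := by
    rw [← Set.infinite_image_iff hf.injOn, ← Set.range_comp]; rfl
  constructor
  · rintro ⟨h₁, h₂, h₃⟩
    exact ⟨left_ne_zero_of_mul (hrange ▸ h₁), hleft.1 h₂, hright.1 h₃⟩
  · rintro ⟨h₁, h₂, h₃⟩
    exact ⟨hrange ▸ mul_ne_zero h₁ hidx, hleft.2 h₂, hright.2 h₃⟩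

theorem isProductPresentation_subtype_comp_iff {H : Subgroup G} (hH : H.index ≠ 0)
    {φ : A × B →* H} : (H.subtype.comp φ).IsProductPresentation ↔ φ.IsProductPresentation :=
  isProductPresentation_comp_iff H.subtype_injective (by rwa [range_subtype])

namespace IsProductPresentation

theorem comp_prodMap_subtype {φ : A × B →* G} (hφ : φ.IsProductPresentation) {A' : Subgroup A}
    {B' : Subgroup B} (hA' : A'.index ≠ 0) (hB' : B'.index ≠ 0) :
    (φ.comp (A'.subtype.prodMap B'.subtype)).IsProductPresentation where
  index_range_ne_zero := by
    rw [range_comp, range_prodMap, range_subtype, range_subtype, index_map]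
    refine mul_ne_zero (ne_zero_of_dvd_ne_zero ?_ (index_dvd_of_le le_sup_left))
      hφ.index_range_ne_zero
    rw [index_prod]
    exact mul_ne_zero hA' hB'
  infinite_left := by
    have := (φ.comp (inl A B)).infinite_map_of_index_ne_zero hφ.infinite_left hA'
    rwa [coe_map, Set.image_eq_range] at this
  infinite_right := by
    have := (φ.comp (inr A B)).infinite_map_of_index_ne_zero hφ.infinite_right hB'
    rwa [coe_map, Set.image_eq_range] at this

theorem exists_subgroup_presentation {ψ : A × B →* G} (hψ : ψ.IsProductPresentation)
    {H : Subgroup G} (hH : H.index ≠ 0) :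
    ∃ (A' : Subgroup A) (B' : Subgroup B) (φ : A' × B' →* H), φ.IsProductPresentation := by
  set A' := H.comap (ψ.comp (inl A B))
  set B' := H.comap (ψ.comp (inr A B))
  set ψ' := ψ.comp (A'.subtype.prodMap B'.subtype)
  have hmem : ∀ x, ψ' x ∈ H := fun ⟨a, b⟩ => by
    have : ψ' (a, b) = ψ (a, 1) * ψ (1, b) := by rw [← map_mul]; simp [ψ']
    exact this ▸ H.mul_mem a.2 b.2
  refine ⟨A', B', ψ'.codRestrict H hmem, (isProductPresentation_subtype_comp_iff hH).1 ?_⟩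
  exact hψ.comp_prodMap_subtype (index_comap_ne_zero hH _) (index_comap_ne_zero hH _)

end IsProductPresentation

end MonoidHom

theorem presentable_iff_finite_index_subgroup_presentable_general {G : Type} [Group G]
    (H : Subgroup G) (hH : H.index ≠ 0) :
    PresentableByProduct H ↔ PresentableByProduct G := by
  simp only [presentableByProduct_iff]
  constructor
  · rintro ⟨A, B, _, _, φ, hφ⟩
    exact ⟨A, B, _, _, H.subtype.comp φ,
      (MonoidHom.isProductPresentation_subtype_comp_iff hH).2 hφ⟩
  · rintro ⟨A, B, _, _, ψ, hψ⟩
    obtain ⟨A', B', φ, hφ⟩ := hψ.exists_subgroup_presentation hH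
    exact ⟨A', B', _, _, φ, hφ⟩

/-- Let Γ be an infinite group and let Γ' be a subgroup of finite
index in Γ (so Γ' is also infinite). Then Γ' is presentable by a product if and
only if Γ is presentable by a product. -/
theorem presentable_iff_finite_index_subgroup_presentable {G : Type} [Group G]
    [Infinite G] (H : Subgroup G) (hH : H.index ≠ 0) :
    PresentableByProduct H ↔ PresentableByProduct G :=
  presentable_iff_finite_index_subgroup_presentable_general H hH
end

section
/- Let Γ be a group that is not virtually cyclic, that contains an element of infinite order, and in which the centraliser of every element of infinite order is virtually cyclic. Then the centre of Γ is finite. -/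
/-!
Pick `g` of infinite order. The centre lies in the centraliser of `g`, which is virtually cyclic,
so if the centre were infinite it would contain an element `z` of infinite order, as every
infinite subgroup of a virtually cyclic group does. But the centraliser of a central `z` is the
whole group, which would then be virtually cyclic.
-/

/-- A group is *virtually cyclic* if it contains a cyclic subgroup of finite index. -/
def VirtuallyCyclic (G : Type*) [Group G] : Prop :=
  ∃ C : Subgroup G, IsCyclic C ∧ C.index ≠ 0

open Subgroup

namespace VirtuallyCyclic

variable {G : Type*} [Group G]

lemma of_mulEquiv {H : Type*} [Group H] (e : G ≃* H) (h : VirtuallyCyclic G) :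
    VirtuallyCyclic H := by
  obtain ⟨C, hC, hCi⟩ := h
  refine ⟨C.map (e : G →* H), ?_, ?_⟩
  · exact isCyclic_of_surjective _ (C.equivMapOfInjective (e : G →* H) e.injective).surjective
  · rwa [map_equiv_eq_comap_symm, index_comap_of_surjective _ e.symm.surjective]

lemma subgroup (h : VirtuallyCyclic G) (K : Subgroup G) : VirtuallyCyclic K := by
  obtain ⟨C, hC, hCi⟩ := h
  have : C.FiniteIndex := ⟨hCi⟩
  refine ⟨C.subgroupOf K, ?_, FiniteIndex.index_ne_zero⟩
  let toC : C.subgroupOf K →* C :=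
    (K.subtype.comp (C.subgroupOf K).subtype).codRestrict C fun x ↦ x.2
  exact isCyclic_of_injective toC fun _ _ h ↦
    Subtype.val_injective <| Subtype.val_injective (congrArg Subtype.val h :)

lemma exists_not_isOfFinOrder [Infinite G] (h : VirtuallyCyclic G) :
    ∃ g : G, ¬IsOfFinOrder g := by
  obtain ⟨C, hC, hCi⟩ := h
  have : C.FiniteIndex := ⟨hCi⟩
  have : Infinite C := not_finite_iff_infinite.mp fun hfin ↦
    not_finite_iff_infinite.mpr ‹_› ((finite_iff_finite_and_finiteIndex C).mpr ⟨hfin, ‹_›⟩)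
  obtain ⟨c, hc⟩ := IsCyclic.exists_ofOrder_eq_natCard (α := C)
  refine ⟨c, ?_⟩
  rw [← orderOf_eq_zero_iff, Subgroup.orderOf_coe, hc, Nat.card_eq_zero_of_infinite]

end VirtuallyCyclic

lemma Subgroup.exists_mem_not_isOfFinOrder_of_le {G : Type*} [Group G] {H K : Subgroup G}
    (hH : VirtuallyCyclic H) (hKH : K ≤ H) [Infinite K] : ∃ k ∈ K, ¬IsOfFinOrder k := by
  have : Infinite (K.subgroupOf H) := (subgroupOfEquivOfLe hKH).infinite_iff.mpr ‹_›
  obtain ⟨z, hz⟩ := (hH.subgroup (K.subgroupOf H)).exists_not_isOfFinOrder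
  exact ⟨z, z.2, fun h ↦ hz (Submonoid.isOfFinOrder_coe.mp (Submonoid.isOfFinOrder_coe.mp h))⟩

/-- Let Γ be a group that is not virtually cyclic, that contains an
element of infinite order, and in which the centraliser of every element of
infinite order is virtually cyclic. Then the centre of Γ is finite. -/
theorem center_finite_of_virtually_cyclic_centralizers {G : Type*} [Group G]
    (hnvc : ¬ VirtuallyCyclic G)
    (hex : ∃ g : G, ¬ IsOfFinOrder g)
    (hcen : ∀ g : G, ¬ IsOfFinOrder g → VirtuallyCyclic (Subgroup.centralizer {g})) :
    Finite (Subgroup.center G) := by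
  obtain ⟨g, hg⟩ := hex
  by_contra hZ
  have : Infinite (center G) := not_finite_iff_infinite.mp hZ
  obtain ⟨z, hz_center, hz⟩ :=
    exists_mem_not_isOfFinOrder_of_le (hcen g hg) (center_le_centralizer {g})
  have htop : centralizer {z} = ⊤ :=
    centralizer_eq_top_iff_subset.mpr (Set.singleton_subset_iff.mpr hz_center)
  exact hnvc ((htop ▸ hcen z hz).of_mulEquiv topEquiv)
end

section
/- Let Γ be a group that is not virtually cyclic, that contains an element of infinite order, and in which the centraliser of every element of infinite order is virtually cyclic. Then Γ is not presentable by a product. -/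
open Subgroup MonoidHom

variable {G : Type*} [Group G]

lemma VirtuallyCyclic.exists_isCyclic_relIndex_ne_zero {D : Subgroup G}
    (h : VirtuallyCyclic D) : ∃ Z : Subgroup G, IsCyclic Z ∧ Z.relIndex D ≠ 0 := by
  obtain ⟨C, hC, hCD⟩ := h
  have e := C.equivMapOfInjective D.subtype D.subtype_injective
  refine ⟨C.map D.subtype, isCyclic_of_surjective e.toMonoidHom e.surjective, ?_⟩
  rwa [relIndex, subgroupOf, comap_map_eq_self_of_injective D.subtype_injective]

lemma VirtuallyCyclic.of_index_ne_zero {D : Subgroup G} (h : VirtuallyCyclic D)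
    (hD : D.index ≠ 0) : VirtuallyCyclic G := by
  obtain ⟨Z, hZ, hZD⟩ := h.exists_isCyclic_relIndex_ne_zero
  refine ⟨Z, hZ, ?_⟩
  rw [← relIndex_top_right] at hD ⊢
  exact relIndex_ne_zero_trans hZD hD

lemma exists_not_isOfFinOrder_relIndex_centralizer_ne_zero {Z K : Subgroup G} [IsCyclic Z]
    [Infinite K] (hZK : Z.relIndex K ≠ 0) :
    ∃ z ∈ K, ¬IsOfFinOrder z ∧ (centralizer {z}).relIndex K ≠ 0 := by
  set L := Z ⊓ K
  have hLK : L.relIndex K ≠ 0 := by rwa [inf_relIndex_right]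
  have hL : Nat.card L = 0 := by
    have h := relIndex_mul_relIndex ⊥ L K bot_le inf_le_right
    rw [relIndex_bot_left, relIndex_bot_left, Nat.card_eq_zero_of_infinite (α := K)] at h
    exact (mul_eq_zero.mp h).resolve_right hLK
  have : IsCyclic L := isCyclic_of_le inf_le_left
  obtain ⟨ζ, hζ⟩ := IsCyclic.exists_generator (α := L)
  have hLζ : L ≤ centralizer {(ζ : G)} := by
    intro x hx
    obtain ⟨k, hk⟩ := mem_zpowers_iff.mp (hζ ⟨x, hx⟩)
    rw [mem_centralizer_singleton_iff]
    exact congrArg Subtype.val (hk ▸ ((Commute.refl ζ).zpow_left k).eq)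
  refine ⟨ζ, ζ.2.2, ?_, fun h0 => hLK (relIndex_eq_zero_of_le_left hLζ h0)⟩
  rw [← orderOf_eq_zero_iff, orderOf_coe, orderOf_eq_card_of_forall_mem_zpowers hζ, hL]

lemma index_ne_zero_of_apply_inl_mem {A B : Type*} [Group A] [Group B] (φ : A × B →* G)
    (hφ : φ.range.index ≠ 0) {D : Subgroup G} (hA : ∀ a, φ (a, 1) ∈ D)
    (hB : D.relIndex (φ.comp (inr A B)).range ≠ 0) : D.index ≠ 0 := by
  have hprod : (⊤ : Subgroup A).prod (D.comap (φ.comp (inr A B))) ≤ D.comap φ := by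
    rintro ⟨a, b⟩ ⟨-, hb⟩
    have hab : ((a, b) : A × B) = (a, 1) * (1, b) := by simp
    rw [mem_comap, hab, map_mul]
    exact D.mul_mem (hA a) hb
  have hrange : D.relIndex φ.range ≠ 0 := by
    rw [← index_comap] at hB ⊢
    refine ne_zero_of_dvd_ne_zero ?_ (index_dvd_of_le hprod)
    rwa [index_prod, index_top, one_mul]
  rw [← relIndex_top_right] at hφ ⊢
  exact relIndex_ne_zero_trans hrange hφ

lemma virtuallyCyclic_of_not_isOfFinOrder_apply_inl
    (hcen : ∀ g : G, ¬IsOfFinOrder g → VirtuallyCyclic (centralizer {g}))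
    {A B : Type*} [Group A] [Group B] (φ : A × B →* G) (hφ : φ.range.index ≠ 0)
    (hB : (Set.range fun b : B => φ (1, b)).Infinite) {a : A}
    (ha : ¬IsOfFinOrder (φ (a, 1))) : VirtuallyCyclic G := by
  set K := (φ.comp (inr A B)).range
  have : Infinite K := by
    rw [← SetLike.coe_sort_coe, coe_range]
    exact hB.to_subtype
  have hK : K ≤ centralizer {φ (a, 1)} := by
    rintro _ ⟨b, rfl⟩
    exact mem_centralizer_singleton_iff.mpr ((commute_inl_inr a b).map φ).eq.symm
  obtain ⟨Z, hZ, hZK⟩ := (hcen _ ha).exists_isCyclic_relIndex_ne_zero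
  obtain ⟨z, ⟨b, rfl⟩, hz, hzK⟩ := exists_not_isOfFinOrder_relIndex_centralizer_ne_zero
    fun h0 => hZK (relIndex_eq_zero_of_le_right hK h0)
  refine (hcen _ hz).of_index_ne_zero (index_ne_zero_of_apply_inl_mem φ hφ (fun a' => ?_) hzK)
  exact mem_centralizer_singleton_iff.mpr ((commute_inl_inr a' b).map φ).eq

/-- Let Γ be a group that is not virtually cyclic, that contains an
element of infinite order, and in which the centraliser of every element of
infinite order is virtually cyclic. Then Γ is not presentable by a product. -/
theorem not_presentable_of_virtually_cyclic_centralizers {G : Type} [Group G]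
    (hnvc : ¬ VirtuallyCyclic G)
    (hex : ∃ g : G, ¬ IsOfFinOrder g)
    (hcen : ∀ g : G, ¬ IsOfFinOrder g → VirtuallyCyclic (Subgroup.centralizer {g})) :
    ¬ PresentableByProduct G := by
  rintro ⟨A, B, _, _, φ, hφ, hA, hB⟩
  obtain ⟨g, hg⟩ := hex
  obtain ⟨n, hn, -, ⟨a, b⟩, hab⟩ := exists_pow_mem_of_index_ne_zero hφ g
  have hcomm : Commute (φ (a, 1)) (φ (1, b)) := (commute_inl_inr a b).map φ
  have hprod : ¬IsOfFinOrder (φ (a, 1) * φ (1, b)) := by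
    rw [← map_mul, Prod.mk_mul_mk, mul_one, one_mul, hab]
    exact fun h => hg (h.of_pow hn.ne')
  by_cases ha : IsOfFinOrder (φ (a, 1))
  · have hb : ¬IsOfFinOrder (φ (1, b)) := fun hb => hprod (hcomm.isOfFinOrder_mul ha hb)
    let ψ := φ.comp (MulEquiv.prodComm : B × A ≃* A × B).toMonoidHom
    have hψ : ψ.range = φ.range := by
      rw [range_comp, range_eq_top_of_surjective _ MulEquiv.prodComm.surjective, ← range_eq_map]
    exact hnvc (virtuallyCyclic_of_not_isOfFinOrder_apply_inl hcen ψ (hψ ▸ hφ) hA hb)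
  · exact hnvc (virtuallyCyclic_of_not_isOfFinOrder_apply_inl hcen φ hφ hB ha)
end

section
/- Let Γ be a group, K a normal subgroup of Γ with quotient map π : Γ → Γ/K, and set Q = Γ/K. Assume that K and Q are both nontrivial, torsion-free, and not presentable by products. Then Γ is presentable by a product if and only if there exist subgroups H₁ ≤ K and H₂ ≤ Γ such that: H₁ has finite index in K; π restricted to H₂ is injective and π(H₂) has finite index in Q; H₁ and H₂ commute elementwise; and the subgroup of Γ generated by H₁ ∪ H₂ has finite index in Γ. In other words, Γ is presentable by a product if and only if Γ has a finite index subgroup that is a direct product of a finite index subgroup of K and a subgroup mapping isomorphically onto a finite index subgroup of Q. -/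
open Subgroup

section

variable {G : Type*} [Group G]

theorem Subgroup.eq_bot_of_finite_of_not_isOfFinOrder {C : Subgroup G}
    (hC : (C : Set G).Finite) (htf : ∀ g ∈ C, g ≠ 1 → ¬ IsOfFinOrder g) : C = ⊥ := by
  refine (eq_bot_iff_forall C).2 fun g hg => ?_
  have : Finite C := hC.to_subtype
  by_contra hg1
  exact htf g hg hg1 (C.subtype.isOfFinOrder (isOfFinOrder_of_finite (⟨g, hg⟩ : C)))

theorem Subgroup.relIndex_ne_zero_of_index_ne_zero {H : Subgroup G} (h : H.index ≠ 0)
    {K : Subgroup G} : H.relIndex K ≠ 0 :=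
  mt (relIndex_eq_zero_of_le_right le_top) (by rwa [relIndex_top_right])

theorem Subgroup.infinite_of_relIndex_ne_zero {H K : Subgroup G} (h : H.relIndex K ≠ 0)
    {g : G} (hgK : g ∈ K) (hg : ¬ IsOfFinOrder g) : (H : Set G).Infinite := by
  obtain ⟨n, hn, -, hgn⟩ := exists_pow_mem_of_relIndex_ne_zero h hgK
  exact (infinite_zpowers.2 fun h => hg (h.of_pow hn.ne')).mono
    (zpowers_le.2 (mem_inf.1 hgn).1)

theorem Subgroup.sup_inf_eq_of_le_of_commute {A B C : Subgroup G}
    (hcomm : ∀ x ∈ A, ∀ y ∈ B, x * y = y * x) (hAC : A ≤ C) :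
    A ⊔ (B ⊓ C) = (A ⊔ B) ⊓ C := by
  have hA : ∀ {B' : Subgroup G}, B' ≤ B → A ≤ normalizer (B' : Set G) := fun hB' x hx =>
    centralizer_le_normalizer _ (mem_centralizer_iff.2 fun y hy => (hcomm x hx y (hB' hy)).symm)
  apply SetLike.coe_injective
  rw [coe_mul_of_left_le_normalizer_right _ _ (hA inf_le_left), mul_inf_assoc _ _ _ hAC,
    coe_inf, coe_mul_of_left_le_normalizer_right _ _ (hA le_rfl)]

end

theorem presentableByProduct_iff_exists_commuting_subgroups {G : Type} [Group G] :
    PresentableByProduct G ↔ ∃ C₁ C₂ : Subgroup G, (∀ x ∈ C₁, ∀ y ∈ C₂, x * y = y * x) ∧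
      (C₁ ⊔ C₂).index ≠ 0 ∧ (C₁ : Set G).Infinite ∧ (C₂ : Set G).Infinite := by
  constructor
  · rintro ⟨A, B, _, _, φ, hidx, hA, hB⟩
    refine ⟨(φ.comp (.inl A B)).range, (φ.comp (.inr A B)).range, ?_, ?_, hA, hB⟩
    · rintro - ⟨a, rfl⟩ - ⟨b, rfl⟩
      exact (MonoidHom.commute_inl_inr a b).map φ
    · rwa [← MonoidHom.noncommCoprod_unique φ, MonoidHom.noncommCoprod_range] at hidx
  · rintro ⟨C₁, C₂, hcomm, hidx, h₁, h₂⟩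
    have hcomm' : ∀ (a : C₁) (b : C₂), Commute (C₁.subtype a) (C₂.subtype b) :=
      fun a b => hcomm a a.2 b b.2
    refine ⟨C₁, C₂, inferInstance, inferInstance, C₁.subtype.noncommCoprod C₂.subtype hcomm',
      ?_, ?_, ?_⟩
    · rwa [MonoidHom.noncommCoprod_range, range_subtype, range_subtype]
    · simpa using h₁
    · simpa using h₂

theorem finite_or_finite_of_not_presentableByProduct {G : Type} [Group G]
    (hnp : ¬ PresentableByProduct G) {C₁ C₂ : Subgroup G}
    (hcomm : ∀ x ∈ C₁, ∀ y ∈ C₂, x * y = y * x) (hidx : (C₁ ⊔ C₂).index ≠ 0) :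
    (C₁ : Set G).Finite ∨ (C₂ : Set G).Finite := by
  by_contra! h
  exact hnp (presentableByProduct_iff_exists_commuting_subgroups.2 ⟨C₁, C₂, hcomm, hidx, h⟩)

theorem Subgroup.finite_or_finite_of_not_presentableByProduct {G : Type} [Group G]
    {K : Subgroup G} (hnp : ¬ PresentableByProduct K) {C₁ C₂ : Subgroup G} (h₁ : C₁ ≤ K)
    (h₂ : C₂ ≤ K) (hcomm : ∀ x ∈ C₁, ∀ y ∈ C₂, x * y = y * x)
    (hidx : (C₁ ⊔ C₂).relIndex K ≠ 0) :
    (C₁ : Set G).Finite ∨ (C₂ : Set G).Finite := by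
  have hfinite {C : Subgroup G} (hC : C ≤ K) (h : (C.subgroupOf K : Set K).Finite) :
      (C : Set G).Finite := by
    rw [← map_subgroupOf_eq_of_le hC, coe_map]
    exact h.image K.subtype
  refine (_root_.finite_or_finite_of_not_presentableByProduct hnp
    (C₁ := C₁.subgroupOf K) (C₂ := C₂.subgroupOf K)
    (fun x hx y hy => Subtype.ext (hcomm x hx y hy)) ?_).imp (hfinite h₁) (hfinite h₂)
  rwa [← subgroupOf_sup h₁ h₂]

theorem MonoidHom.le_ker_or_le_ker_of_not_presentableByProduct {G Q : Type} [Group G]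
    [Group Q] {f : G →* Q} (hf : Function.Surjective f)
    (hQtf : ∀ q : Q, q ≠ 1 → ¬ IsOfFinOrder q) (hQnp : ¬ PresentableByProduct Q)
    {C₁ C₂ : Subgroup G} (hcomm : ∀ x ∈ C₁, ∀ y ∈ C₂, x * y = y * x)
    (hidx : (C₁ ⊔ C₂).index ≠ 0) :
    C₁ ≤ f.ker ∨ C₂ ≤ f.ker := by
  have hcomm' : ∀ x ∈ C₁.map f, ∀ y ∈ C₂.map f, x * y = y * x := by
    rintro - ⟨a, ha, rfl⟩ - ⟨b, hb, rfl⟩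
    rw [← map_mul, ← map_mul, hcomm a ha b hb]
  have hidx' : (C₁.map f ⊔ C₂.map f).index ≠ 0 := by
    rw [← Subgroup.map_sup]
    exact ne_zero_of_dvd_ne_zero hidx (index_map_dvd _ hf)
  refine (finite_or_finite_of_not_presentableByProduct hQnp hcomm' hidx').imp ?_ ?_ <;>
    exact fun h => (Subgroup.map_eq_bot_iff _).1
      (eq_bot_of_finite_of_not_isOfFinOrder h fun q _ => hQtf q)

theorem inf_eq_bot_of_not_presentableByProduct {G : Type} [Group G] {K : Subgroup G}
    (hKtf : ∀ g ∈ K, g ≠ 1 → ¬ IsOfFinOrder g) (hKnp : ¬ PresentableByProduct K)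
    {C₁ C₂ : Subgroup G} (hcomm : ∀ x ∈ C₁, ∀ y ∈ C₂, x * y = y * x)
    (hidx : (C₁ ⊔ C₂).index ≠ 0) (h₁ : (C₁ : Set G).Infinite) (hC₁K : C₁ ≤ K) :
    C₂ ⊓ K = ⊥ := by
  have hidx' : (C₁ ⊔ C₂ ⊓ K).relIndex K ≠ 0 := by
    rw [sup_inf_eq_of_le_of_commute hcomm hC₁K, inf_relIndex_right]
    exact relIndex_ne_zero_of_index_ne_zero hidx
  have hfinite := (K.finite_or_finite_of_not_presentableByProduct hKnp hC₁K inf_le_right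
    (fun x hx y hy => hcomm x hx y hy.1) hidx').resolve_left h₁
  exact eq_bot_of_finite_of_not_isOfFinOrder hfinite fun g hg => hKtf g hg.2

theorem exists_virtual_splitting_of_le {G : Type} [Group G] {K : Subgroup G} [K.Normal]
    (hKtf : ∀ g ∈ K, g ≠ 1 → ¬ IsOfFinOrder g) (hKnp : ¬ PresentableByProduct K)
    {C₁ C₂ : Subgroup G} (hcomm : ∀ x ∈ C₁, ∀ y ∈ C₂, x * y = y * x)
    (hidx : (C₁ ⊔ C₂).index ≠ 0) (h₁ : (C₁ : Set G).Infinite) (hC₁K : C₁ ≤ K) :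
    ∃ H₁ H₂ : Subgroup G,
      H₁ ≤ K ∧
      H₁.relIndex K ≠ 0 ∧
      (∀ x ∈ H₂, ∀ y ∈ H₂,
        QuotientGroup.mk' K x = QuotientGroup.mk' K y → x = y) ∧
      (H₂.map (QuotientGroup.mk' K)).index ≠ 0 ∧
      (∀ g₁ ∈ H₁, ∀ g₂ ∈ H₂, g₁ * g₂ = g₂ * g₁) ∧
      (Subgroup.closure ((H₁ : Set G) ∪ (H₂ : Set G))).index ≠ 0 := by
  have hC₂K := inf_eq_bot_of_not_presentableByProduct hKtf hKnp hcomm hidx h₁ hC₁K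
  have hC₁ : C₁ = (C₁ ⊔ C₂) ⊓ K := by
    rw [← sup_inf_eq_of_le_of_commute hcomm hC₁K, hC₂K, sup_bot_eq]
  refine ⟨C₁, C₂, hC₁K, ?_, ?_, ?_, hcomm, ?_⟩
  · rw [hC₁, inf_relIndex_right]
    exact relIndex_ne_zero_of_index_ne_zero hidx
  · intro x hx y hy hxy
    have hxy' : x⁻¹ * y ∈ C₂ ⊓ K := ⟨C₂.mul_mem (C₂.inv_mem hx) hy, QuotientGroup.eq.1 hxy⟩
    rwa [hC₂K, mem_bot, inv_mul_eq_one] at hxy'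
  · have hC₁π : C₁.map (QuotientGroup.mk' K) = ⊥ := by
      rwa [Subgroup.map_eq_bot_iff, QuotientGroup.ker_mk']
    rw [← bot_sup_eq (C₂.map _), ← hC₁π, ← Subgroup.map_sup]
    exact ne_zero_of_dvd_ne_zero hidx (index_map_dvd _ (QuotientGroup.mk'_surjective K))
  · rwa [Subgroup.closure_union, closure_eq, closure_eq]

/-- Let Γ be a group, K a normal subgroup of Γ with quotient map
π : Γ → Γ/K, and set Q = Γ/K. Assume that K and Q are both nontrivial,
torsion-free, and not presentable by products. Then Γ is presentable by a product
if and only if there exist subgroups H₁ ≤ K and H₂ ≤ Γ such that: H₁ has finite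
index in K; π restricted to H₂ is injective and π(H₂) has finite index in Q;
H₁ and H₂ commute elementwise; and the subgroup of Γ generated by H₁ ∪ H₂ has
finite index in Γ. -/
theorem presentable_iff_virtually_splits_extension {G : Type} [Group G]
    (K : Subgroup G) [K.Normal]
    (hKnt : K ≠ ⊥)
    (hKtf : ∀ g ∈ K, g ≠ 1 → ¬ IsOfFinOrder g)
    (hKnp : ¬ PresentableByProduct K)
    (hQnt : Nontrivial (G ⧸ K))
    (hQtf : ∀ q : G ⧸ K, q ≠ 1 → ¬ IsOfFinOrder q)
    (hQnp : ¬ PresentableByProduct (G ⧸ K)) :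
    PresentableByProduct G ↔
      ∃ H₁ H₂ : Subgroup G,
        H₁ ≤ K ∧
        H₁.relIndex K ≠ 0 ∧
        (∀ x ∈ H₂, ∀ y ∈ H₂,
          QuotientGroup.mk' K x = QuotientGroup.mk' K y → x = y) ∧
        (H₂.map (QuotientGroup.mk' K)).index ≠ 0 ∧
        (∀ g₁ ∈ H₁, ∀ g₂ ∈ H₂, g₁ * g₂ = g₂ * g₁) ∧
        (Subgroup.closure ((H₁ : Set G) ∪ (H₂ : Set G))).index ≠ 0 := by
  constructor
  · intro h
    obtain ⟨C₁, C₂, hcomm, hidx, h₁, h₂⟩ :=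
      presentableByProduct_iff_exists_commuting_subgroups.1 h
    rcases (QuotientGroup.mk' K).le_ker_or_le_ker_of_not_presentableByProduct
      (QuotientGroup.mk'_surjective K) hQtf hQnp hcomm hidx with hC₁ | hC₂
    · exact exists_virtual_splitting_of_le hKtf hKnp hcomm hidx h₁
        (hC₁.trans (QuotientGroup.ker_mk' K).le)
    · exact exists_virtual_splitting_of_le hKtf hKnp (fun x hx y hy => (hcomm y hy x hx).symm)
        (sup_comm C₁ C₂ ▸ hidx) h₂ (hC₂.trans (QuotientGroup.ker_mk' K).le)
  · rintro ⟨H₁, H₂, -, hH₁, -, hH₂, hcomm, hidx⟩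
    obtain ⟨g, hgK, hg⟩ := K.bot_or_exists_ne_one.resolve_left hKnt
    obtain ⟨q, hq⟩ := exists_ne (1 : G ⧸ K)
    have hH₂π : (H₂.map (QuotientGroup.mk' K) : Set (G ⧸ K)).Infinite :=
      infinite_of_relIndex_ne_zero (K := ⊤) (by rwa [relIndex_top_right]) (mem_top q)
        (hQtf q hq)
    rw [Subgroup.coe_map] at hH₂π
    refine presentableByProduct_iff_exists_commuting_subgroups.2 ⟨H₁, H₂, hcomm, ?_,
      infinite_of_relIndex_ne_zero hH₁ hgK (hKtf g hgK hg), hH₂π.of_image⟩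
    rwa [Subgroup.closure_union, closure_eq, closure_eq] at hidx
end
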